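/- Let M be a Hilbert C*-module with a Hilbert dual, with extended inner product ⟨·,·⟩_{M'} on M', and let M be a thick submodule of a Hilbert C*-module N, with i : N → M' the induced injection i(n) = n̂|_M. If the right ideal J_f is essential in A for every f ∈ M', then ⟨n, n'⟩_N = ⟨i(n), i(n')⟩_{M'} for all n, n' ∈ N. -/

import Mathlib

/-!
Write `i n = n̂|_M`. If `a ∈ J_{i n'}`, say `(i n')·a = m̂`, then `n'·a - m` is orthogonal to `M`,
so thickness gives `n'·a = m` in `N`. Hence `⟨n, n'⟩ a = ⟨n, m⟩`, and also
`⟨i n, i n'⟩' a = ⟨i n, m̂⟩' = (i n)(m)^* = ⟨n, m⟩`. The two sides thus agree after right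
multiplication by every element of the essential ideal `J_{i n'}`, so they are equal.
-/

open scoped RightActions

/-- The class `CStarModule` as it stood in Mathlib of December 2024: a Hilbert C*-module
with a *right* action of `A` (through `Aᵐᵒᵖ`), whose inner product is `A`-linear on the right. -/
class RightCStarModule (A : outParam <| Type*) (E : Type*) [NonUnitalSemiring A] [StarRing A]
    [Module ℂ A] [AddCommGroup E] [Module ℂ E] [PartialOrder A] [SMul Aᵐᵒᵖ E] [Norm A] [Norm E]
    extends Inner A E where
  inner_add_right {x} {y} {z} : inner x (y + z) = inner x y + inner x z
  inner_self_nonneg {x} : 0 ≤ inner x x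
  inner_self {x} : inner x x = 0 ↔ x = 0
  inner_op_smul_right {a : A} {x y : E} : inner x (y <• a) = inner x y * a
  inner_smul_right_complex {z : ℂ} {x} {y} : inner x (z • y) = z • inner x y
  star_inner x y : star (inner x y) = inner y x
  norm_eq_sqrt_norm_inner_self x : ‖x‖ = √‖inner x x‖

section Defs

variable {A : Type*} [CStarAlgebra A] [PartialOrder A] [StarOrderedRing A]
variable {E : Type*} [NormedAddCommGroup E] [NormedSpace ℂ E] [SMul Aᵐᵒᵖ E] [RightCStarModule A E]

/-- Membership in the dual module `M'`: a bounded `A`-antilinear functional on `E`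
(the functional `f` plays the role of `m ↦ ⟨m, f⟩`). -/
def IsDualFunctional (f : E → A) : Prop :=
  (∀ x y, f (x + y) = f x + f y) ∧
  (∀ (c : ℂ) (x : E), f (c • x) = (starRingEnd ℂ) c • f x) ∧
  (∀ (x : E) (a : A), f (x <• a) = star a * f x) ∧
  ∃ C : ℝ, ∀ x, ‖f x‖ ≤ C * ‖x‖

/-- The canonical image `m̂` of `m ∈ M` in the dual module: `m̂ x = ⟨x, m⟩`. -/
def mhat (m : E) : E → A := fun x => inner A x m

/-- The right action of `A` on dual functionals: `f·a`. -/
def dualAct (f : E → A) (a : A) : E → A := fun x => f x * a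

/-- The right ideal `J_f = {a ∈ A : f·a ∈ M}`. -/
def Jf (f : E → A) : Set A := {a : A | ∃ m : E, dualAct f a = mhat m}

/-- The right ideal `J_f` is essential in `A`. -/
def JfEssential (f : E → A) : Prop := ∀ a : A, (∀ j ∈ Jf f, a * j = 0) → a = 0

/-- The norm of a functional in the dual module (operator norm). -/
noncomputable def dualNorm (f : E → A) : ℝ :=
  sInf {C : ℝ | 0 ≤ C ∧ ∀ x, ‖f x‖ ≤ C * ‖x‖}

end Defs

section DualInner

variable {A : Type*} [CStarAlgebra A] [PartialOrder A] [StarOrderedRing A]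
variable {E : Type*} [NormedAddCommGroup E] [NormedSpace ℂ E] [SMul Aᵐᵒᵖ E] [RightCStarModule A E]

/-- `inn` is an extension of the inner product of `M` to the dual module `M'`,
making `M'` a (complete) Hilbert C*-module; this is the meaning of
"`M` is a Hilbert C*-module with a Hilbert dual".  -/
structure IsDualInner (inn : (E → A) → (E → A) → A) : Prop where
  extends_inner : ∀ m n : E, inn (mhat m) (mhat n) = inner A m n
  eval : ∀ f : E → A, IsDualFunctional f → ∀ m : E, f m = inn (mhat m) f
  add_right : ∀ f g h : E → A, inn f (g + h) = inn f g + inn f h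
  act_right : ∀ (f g : E → A) (a : A), inn f (dualAct g a) = inn f g * a
  star_inn : ∀ f g : E → A, star (inn f g) = inn g f
  nonneg : ∀ f : E → A, IsDualFunctional f → 0 ≤ inn f f
  definite : ∀ f : E → A, IsDualFunctional f → inn f f = 0 → f = 0
  complete : ∀ u : ℕ → E → A, (∀ n, IsDualFunctional (u n)) →
    (∀ ε : ℝ, 0 < ε → ∃ N, ∀ p q, N ≤ p → N ≤ q → ‖inn (u p - u q) (u p - u q)‖ < ε) →
    ∃ g : E → A, IsDualFunctional g ∧
      Filter.Tendsto (fun n => ‖inn (u n - g) (u n - g)‖) Filter.atTop (nhds 0)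

end DualInner

section Incl

variable {A : Type*} [CStarAlgebra A] [PartialOrder A] [StarOrderedRing A]
variable {E : Type*} [NormedAddCommGroup E] [NormedSpace ℂ E] [SMul Aᵐᵒᵖ E] [RightCStarModule A E]
variable {F : Type*} [NormedAddCommGroup F] [NormedSpace ℂ F] [SMul Aᵐᵒᵖ F] [RightCStarModule A F]

/-- `α : M → N` realizes `M` as a Hilbert C*-submodule of `N` (the inner product of `M`
being the restriction of that of `N`). -/
structure IsModuleInclusion (α : E → F) : Prop where
  map_add : ∀ x y, α (x + y) = α x + α y
  map_smulC : ∀ (c : ℂ) (x : E), α (c • x) = c • α x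
  map_smulA : ∀ (x : E) (a : A), α (x <• a) = α x <• a
  map_inner : ∀ x y : E, (inner A (α x) (α y) : A) = inner A x y
  injective : Function.Injective α

/-- `M` is a thick submodule of `N`, i.e. `M^⊥ = 0` in `N`. -/
def IsThick (α : E → F) : Prop := ∀ z : F, (∀ m : E, (inner A (α m) z : A) = 0) → z = 0

/-- The functional `n̂|_M ∈ M'` induced by `n ∈ N`. -/
def restrictFun (α : E → F) (n : F) : E → A := fun m => inner A (α m) n

end Incl

variable {A : Type*} [CStarAlgebra A] [PartialOrder A] [StarOrderedRing A]
variable {E : Type*} [NormedAddCommGroup E] [NormedSpace ℂ E] [SMul Aᵐᵒᵖ E] [RightCStarModule A E]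
variable {F : Type*} [NormedAddCommGroup F] [NormedSpace ℂ F] [SMul Aᵐᵒᵖ F] [RightCStarModule A F]

namespace RightCStarModule

omit [StarOrderedRing A]

/-- A right Hilbert `A`-module is a Hilbert `Aᵐᵒᵖ`-module in Mathlib's convention, which lets
us reuse Mathlib's Cauchy–Schwarz inequality. -/
abbrev toCStarModuleOp : CStarModule Aᵐᵒᵖ E where
  inner x y := MulOpposite.op (inner A x y)
  inner_add_right := congrArg MulOpposite.op inner_add_right
  inner_self_nonneg := MulOpposite.op_nonneg.mpr inner_self_nonneg
  inner_self := (MulOpposite.op_eq_zero_iff _).trans inner_self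
  inner_op_smul_right {a x y} := congrArg MulOpposite.op (inner_op_smul_right (a := a.unop))
  inner_smul_right_complex := congrArg MulOpposite.op inner_smul_right_complex
  star_inner x y := by rw [← MulOpposite.op_star, star_inner]
  norm_eq_sqrt_norm_inner_self x := norm_eq_sqrt_norm_inner_self x

theorem inner_add_left (x y z : E) : (inner A (x + y) z : A) = inner A x z + inner A y z := by
  rw [← star_inner z, inner_add_right, star_add, star_inner, star_inner]

theorem inner_smul_left_complex (c : ℂ) (x y : E) :
    (inner A (c • x) y : A) = star c • inner A x y := by
  rw [← star_inner y, inner_smul_right_complex, star_smul, star_inner]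

theorem inner_op_smul_left (a : A) (x y : E) :
    (inner A (x <• a) y : A) = star a * inner A x y := by
  rw [← star_inner y, inner_op_smul_right, star_mul, star_inner]

theorem inner_sub_right (x y z : E) : (inner A x (y - z) : A) = inner A x y - inner A x z := by
  rw [eq_sub_iff_add_eq, ← inner_add_right, sub_add_cancel]

end RightCStarModule

theorem RightCStarModule.norm_inner_le (x y : E) : ‖(inner A x y : A)‖ ≤ ‖x‖ * ‖y‖ :=
  letI := RightCStarModule.toCStarModuleOp (A := A) (E := E)
  CStarModule.norm_inner_le (A := Aᵐᵒᵖ) E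

section

omit [StarOrderedRing A]

theorem IsModuleInclusion.norm_map {α : E → F} (hα : IsModuleInclusion (A := A) α) (x : E) :
    ‖α x‖ = ‖x‖ := by
  rw [RightCStarModule.norm_eq_sqrt_norm_inner_self (A := A), hα.map_inner,
    ← RightCStarModule.norm_eq_sqrt_norm_inner_self]

theorem IsThick.op_smul_eq_of_dualAct_restrictFun_eq {α : E → F}
    (hα : IsModuleInclusion (A := A) α) (hthick : IsThick α) {n : F} {a : A} {m : E}
    (h : dualAct (restrictFun α n) a = mhat m) : n <• a = α m := by
  refine sub_eq_zero.mp (hthick _ fun x => ?_)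
  have hx := congrFun h x
  simp only [dualAct, restrictFun, mhat] at hx
  rw [RightCStarModule.inner_sub_right, RightCStarModule.inner_op_smul_right, hx, hα.map_inner,
    sub_self]

theorem IsDualInner.inn_mhat_right {inn : (E → A) → (E → A) → A} (hinn : IsDualInner inn)
    {f : E → A} (hf : IsDualFunctional f) (m : E) : inn f (mhat m) = star (f m) := by
  rw [hinn.eval f hf, hinn.star_inn]

theorem JfEssential.eq_of_forall_mul_eq {f : E → A} (hf : JfEssential f) {x y : A}
    (h : ∀ j ∈ Jf f, x * j = y * j) : x = y :=
  sub_eq_zero.mp <| hf _ fun j hj => by rw [sub_mul, h j hj, sub_self]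

end

theorem IsModuleInclusion.isDualFunctional_restrictFun {α : E → F}
    (hα : IsModuleInclusion (A := A) α) (n : F) : IsDualFunctional (restrictFun α n) := by
  refine ⟨fun x y => ?_, fun c x => ?_, fun x a => ?_, ‖n‖, fun x => ?_⟩
  · simp only [restrictFun, hα.map_add, RightCStarModule.inner_add_left]
  · simp only [restrictFun, hα.map_smulC, RightCStarModule.inner_smul_left_complex,
      Complex.star_def]
  · simp only [restrictFun, hα.map_smulA, RightCStarModule.inner_op_smul_left]
  · calc ‖restrictFun α n x‖ ≤ ‖α x‖ * ‖n‖ := RightCStarModule.norm_inner_le (α x) n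
      _ = ‖n‖ * ‖x‖ := by rw [hα.norm_map, mul_comm]

/-- If `M` has a Hilbert dual, `M` is thick in `N` (inducing the injection
`i : N → M'`, `i n = n̂|_M`), and `J_f` is essential for every `f ∈ M'`, then
the inner product of `N` coincides with the extended inner product of `M'`:
`⟨n, n'⟩_N = ⟨i n, i n'⟩_{M'}`. -/
theorem inner_eq_dualInner_of_essential
    (inn : (E → A) → (E → A) → A) (hinn : IsDualInner inn)
    (α : E → F) (hα : IsModuleInclusion α) (hthick : IsThick α)
    (hess : ∀ f : E → A, IsDualFunctional f → JfEssential f) :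
    ∀ n n' : F, (inner A n n' : A) = inn (restrictFun α n) (restrictFun α n') := by
  intro n n'
  refine (hess _ (hα.isDualFunctional_restrictFun n')).eq_of_forall_mul_eq ?_
  rintro a ⟨m, hm⟩
  have hlift : n' <• a = α m := hthick.op_smul_eq_of_dualAct_restrictFun_eq hα hm
  calc (inner A n n' : A) * a
    _ = inner A n (α m) := by rw [← RightCStarModule.inner_op_smul_right, hlift]
    _ = inn (restrictFun α n) (restrictFun α n') * a := by
      rw [← hinn.act_right, hm, hinn.inn_mhat_right (hα.isDualFunctional_restrictFun n),
        restrictFun, RightCStarModule.star_inner]
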